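/- Let G be a bounded open subset of ℂⁿ, let z ∈ G, and let t ≥ 0. Then there exists a function f : ℂⁿ → ℂ, holomorphic on G, such that ∫_G |f(w)|² e^{−t‖w‖} dV(w) ≤ vol(G) and |f(z)|² = e^{t‖z‖}. -/

import Mathlib

open MeasureTheory Metric

/-! By Hahn–Banach there is a ℂ-linear functional `g` of norm at most one with `g z = ‖z‖`.
Then `f = e^{t g / 2}` satisfies `|f w|² = e^{t Re g(w)} ≤ e^{t ‖w‖}`, so the weighted integrand
`|f|² e^{-t‖w‖}` is at most `1` and integrates to at most `vol G`, while `|f z|² = e^{t ‖z‖}`. -/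

noncomputable instance (n : ℕ) : MeasureSpace (EuclideanSpace ℂ (Fin n)) :=
  { volume := Measure.map (MeasurableEquiv.toLp 2 (Fin n → ℂ)) (volume : Measure (Fin n → ℂ)) }

instance (n : ℕ) :
    IsFiniteMeasureOnCompacts (volume : Measure (EuclideanSpace ℂ (Fin n))) :=
  Measure.IsFiniteMeasureOnCompacts.map (volume : Measure (Fin n → ℂ))
    (PiLp.homeomorph 2 fun _ : Fin n => ℂ).symm

theorem norm_cexp_half_mul_sq (t : ℝ) (c : ℂ) :
    ‖Complex.exp (t / 2 * c)‖ ^ 2 = Real.exp (t * c.re) := by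
  rw [Complex.norm_exp, ← Real.exp_nat_mul, ← Complex.ofReal_ofNat, ← Complex.ofReal_div,
    Complex.re_ofReal_mul]
  ring_nf

section SupportingFunctional

variable {E : Type*} [NormedAddCommGroup E] [NormedSpace ℂ E]

theorem re_le_norm_of_opNorm_le_one {g : StrongDual ℂ E} (hg : ‖g‖ ≤ 1) (w : E) :
    (g w).re ≤ ‖w‖ :=
  calc (g w).re ≤ ‖g w‖ := Complex.re_le_norm _
    _ ≤ ‖g‖ * ‖w‖ := g.le_opNorm w
    _ ≤ ‖w‖ := mul_le_of_le_one_left (norm_nonneg w) hg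

theorem norm_cexp_sq_mul_exp_neg_le_one {g : StrongDual ℂ E} (hg : ‖g‖ ≤ 1) {t : ℝ}
    (ht : 0 ≤ t) (w : E) :
    ‖Complex.exp (t / 2 * g w)‖ ^ 2 * Real.exp (-t * ‖w‖) ≤ 1 := by
  rw [norm_cexp_half_mul_sq, ← Real.exp_add, Real.exp_le_one_iff]
  nlinarith [re_le_norm_of_opNorm_le_one hg w]

end SupportingFunctional

theorem weighted_bergman_lower_estimate_general (n : ℕ)
    (G : Set (EuclideanSpace ℂ (Fin n)))
    (hGb : Bornology.IsBounded G) (z : EuclideanSpace ℂ (Fin n))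
    (t : ℝ) (ht : 0 ≤ t) :
    ∃ f : EuclideanSpace ℂ (Fin n) → ℂ, DifferentiableOn ℂ f G ∧
      IntegrableOn (fun w => ‖f w‖ ^ 2 * Real.exp (-t * ‖w‖)) G ∧
      (∫ w in G, ‖f w‖ ^ 2 * Real.exp (-t * ‖w‖)) ≤ (volume G).toReal ∧
      ‖f z‖ ^ 2 = Real.exp (t * ‖z‖) := by
  obtain ⟨g, hg, hgz⟩ := exists_dual_vector'' ℂ z
  set f := fun w => Complex.exp (t / 2 * g w)
  have hG : volume G < ⊤ := hGb.measure_lt_top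
  have hbound (w : EuclideanSpace ℂ (Fin n)) : ‖‖f w‖ ^ 2 * Real.exp (-t * ‖w‖)‖ ≤ 1 := by
    rw [Real.norm_of_nonneg (by positivity)]
    exact norm_cexp_sq_mul_exp_neg_le_one hg ht w
  have hcont : Continuous fun w => ‖f w‖ ^ 2 * Real.exp (-t * ‖w‖) := by fun_prop
  refine ⟨f, by fun_prop, ?_, ?_, ?_⟩
  · exact .of_bound hG hcont.aestronglyMeasurable 1 (.of_forall hbound)
  · exact (Real.le_norm_self _).trans
      ((norm_setIntegral_le_of_norm_le_const hG fun w _ => hbound w).trans_eq (one_mul _))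
  · simp [f, norm_cexp_half_mul_sq, hgz]

/-- Lower estimate for the weighted Bergman space: if `G ⊆ ℂⁿ` is bounded
and open, `z ∈ G`, and `t ≥ 0`, then there is a holomorphic `f` on `G` with
`∫_G |f|² e^{-t‖w‖} dV ≤ vol(G)` and `|f z|² = e^{t‖z‖}`. -/
theorem weighted_bergman_lower_estimate (n : ℕ)
    (G : Set (EuclideanSpace ℂ (Fin n))) (hG : IsOpen G)
    (hGb : Bornology.IsBounded G) (z : EuclideanSpace ℂ (Fin n)) (hz : z ∈ G)
    (t : ℝ) (ht : 0 ≤ t) :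
    ∃ f : EuclideanSpace ℂ (Fin n) → ℂ, DifferentiableOn ℂ f G ∧
      IntegrableOn (fun w => ‖f w‖ ^ 2 * Real.exp (-t * ‖w‖)) G ∧
      (∫ w in G, ‖f w‖ ^ 2 * Real.exp (-t * ‖w‖)) ≤ (volume G).toReal ∧
      ‖f z‖ ^ 2 = Real.exp (t * ‖z‖) :=
  weighted_bergman_lower_estimate_general n G hGb z t ht
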